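/- (Almost-sure eventual invertibility) Let C be the confusion matrix and assume C is invertible. Let Ĉ_n denote the empirical confusion matrix built from the first n samples of an iid sequence (x_1,y_1),(x_2,y_2),… drawn from P. Then almost surely, Ĉ_n is invertible for all but finitely many n (i.e., the event that Ĉ_n is not invertible occurs only finitely often with probability one). -/

import Mathlib

open MeasureTheory ProbabilityTheory Filter Matrix

noncomputable section

/-- Population confusion matrix: `C i j = P (f⁻¹(i) × {j})`. -/
def confusion {X : Type*} [MeasurableSpace X] {k : ℕ}
    (P : Measure (X × Fin k)) (f : X → Fin k) : Matrix (Fin k) (Fin k) ℝ :=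
  fun i j => (P ((f ⁻¹' {i}) ×ˢ ({j} : Set (Fin k)))).toReal

/-- Empirical confusion matrix from `n` samples. -/
def empConfusion {X Ω : Type*} {k : ℕ}
    (f : X → Fin k) (Z : ℕ → Ω → X × Fin k) (n : ℕ) (ω : Ω) : Matrix (Fin k) (Fin k) ℝ :=
  fun i j => ((Finset.range n).filter (fun l => f (Z l ω).1 = i ∧ (Z l ω).2 = j)).card / n

/-!
Each entry of `Ĉ_n` is the empirical frequency of the event `f⁻¹(i) × {j}`, so by the strong
law of large numbers applied to its indicator, `Ĉ_n → C` almost surely. The determinant is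
continuous and `det C ≠ 0`, hence `det Ĉ_n ≠ 0` for all large `n`.
-/

open Topology Finset

theorem ae_tendsto_empirical_frequency {Ω E : Type*} [MeasurableSpace Ω] [MeasurableSpace E]
    {μ : Measure Ω} {P : Measure E} [IsFiniteMeasure P] {Z : ℕ → Ω → E} {S : Set E}
    [DecidablePred (· ∈ S)]
    (hZmeas : ∀ l, Measurable (Z l)) (hZlaw : ∀ l, μ.map (Z l) = P)
    (hindep : Pairwise fun l m => IndepFun (Z l) (Z m) μ) (hS : MeasurableSet S) :
    ∀ᵐ ω ∂μ, Tendsto (fun n : ℕ => (#{l ∈ range n | Z l ω ∈ S} : ℝ) / n) atTop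
      (𝓝 (P.real S)) := by
  have hg : Measurable (S.indicator (1 : E → ℝ)) := measurable_one.indicator hS
  have hint : Integrable (S.indicator (1 : E → ℝ)) (μ.map (Z 0)) := by
    rw [hZlaw 0]
    exact (integrable_const (1 : ℝ)).indicator hS
  have hmean : ∫ ω, S.indicator 1 (Z 0 ω) ∂μ = P.real S := by
    rw [← integral_map (hZmeas 0).aemeasurable hg.aestronglyMeasurable, hZlaw 0,
      integral_indicator_one hS]
  have hident : ∀ l, IdentDistrib (Z l) (Z 0) μ μ := fun l =>
    ⟨(hZmeas l).aemeasurable, (hZmeas 0).aemeasurable, by rw [hZlaw l, hZlaw 0]⟩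
  have hslln := strong_law_ae_real (fun l ω => S.indicator 1 (Z l ω))
    ((integrable_map_measure hg.aestronglyMeasurable (hZmeas 0).aemeasurable).mp hint)
    (fun l m hlm => (hindep hlm).comp hg hg) (fun l => (hident l).comp hg)
  filter_upwards [hslln] with ω hω
  rw [hmean] at hω
  simpa [Set.indicator_apply, Finset.sum_boole] using hω

theorem Filter.Tendsto.eventually_isUnit_det {α ι R : Type*} [Fintype ι] [DecidableEq ι]
    [Field R] [TopologicalSpace R] [IsTopologicalRing R] [T1Space R]
    {l : Filter α} {A : α → Matrix ι ι R} {B : Matrix ι ι R}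
    (hA : Tendsto A l (𝓝 B)) (hB : IsUnit B.det) : ∀ᶠ a in l, IsUnit (A a).det := by
  have hdet : Tendsto (fun a => (A a).det) l (𝓝 B.det) :=
    (continuous_id.matrix_det.tendsto B).comp hA
  filter_upwards [hdet.eventually_ne hB.ne_zero] with a ha
  exact ha.isUnit

theorem ae_tendsto_empConfusion {X Ω : Type*} [MeasurableSpace X] [MeasurableSpace Ω] {k : ℕ}
    {μ : Measure Ω} {P : Measure (X × Fin k)} [IsFiniteMeasure P] {f : X → Fin k}
    (hf : Measurable f) {Z : ℕ → Ω → X × Fin k}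
    (hZmeas : ∀ l, Measurable (Z l)) (hZlaw : ∀ l, μ.map (Z l) = P)
    (hindep : Pairwise fun l m => IndepFun (Z l) (Z m) μ) :
    ∀ᵐ ω ∂μ, Tendsto (fun n => empConfusion f Z n ω) atTop (𝓝 (confusion P f)) := by
  classical
  have hentry (i j : Fin k) := ae_tendsto_empirical_frequency hZmeas hZlaw hindep
    ((hf (measurableSet_singleton i)).prod (measurableSet_singleton j))
  filter_upwards [ae_all_iff.2 fun i => ae_all_iff.2 (hentry i)] with ω hω
  exact tendsto_pi_nhds.2 fun i => tendsto_pi_nhds.2 fun j => by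
    simpa [empConfusion, confusion, Set.mem_prod, measureReal_def] using hω i j

theorem empirical_confusion_eventually_invertible_general
    {X : Type*} [MeasurableSpace X] {k : ℕ}
    (P : Measure (X × Fin k)) [IsProbabilityMeasure P]
    (f : X → Fin k) (hf : Measurable f)
    {Ω : Type*} [MeasurableSpace Ω] (μ : Measure Ω)
    (Z : ℕ → Ω → X × Fin k)
    (hZmeas : ∀ l, Measurable (Z l)) (hZlaw : ∀ l, μ.map (Z l) = P)
    (hindep : iIndepFun Z μ)
    (A3 : IsUnit (confusion P f).det) :
    ∀ᵐ ω ∂μ, ∀ᶠ n in atTop, IsUnit (empConfusion f Z n ω).det := by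
  filter_upwards [ae_tendsto_empConfusion hf hZmeas hZlaw fun l m hlm => hindep.indepFun hlm]
    with ω hω
  exact hω.eventually_isUnit_det A3

/-- Almost-sure eventual invertibility. If the population confusion matrix
is invertible, then almost surely the empirical confusion matrix is invertible for all but
finitely many `n`. -/
theorem empirical_confusion_eventually_invertible
    {X : Type*} [MeasurableSpace X] {k : ℕ} (hk : 1 ≤ k)
    (P : Measure (X × Fin k)) [IsProbabilityMeasure P]
    (f : X → Fin k) (hf : Measurable f)
    {Ω : Type*} [MeasurableSpace Ω] (μ : Measure Ω) [IsProbabilityMeasure μ]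
    (Z : ℕ → Ω → X × Fin k)
    (hZmeas : ∀ l, Measurable (Z l)) (hZlaw : ∀ l, μ.map (Z l) = P)
    (hindep : iIndepFun Z μ)
    (A3 : IsUnit (confusion P f).det) :
    ∀ᵐ ω ∂μ, ∀ᶠ n in atTop, IsUnit (empConfusion f Z n ω).det :=
  empirical_confusion_eventually_invertible_general P f hf μ Z hZmeas hZlaw hindep A3

end
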